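/- arXiv:2108.10586 — 3 statements merged into one kernel-verified Lean document; each statement's English description precedes it below -/
import Mathlib

section
/- If (X,∗) is an unloopable pointed topological space whose fundamental group π₁(X,∗) is residually finite, then the baseleaf map ℓ : X̃ → sol X is injective and its image is dense in sol X. -/
open scoped Classical

/-- The directed set of finite-index subgroups of `G`. -/
def FIdx (G : Type*) [Group G] := { H : Subgroup G // H.FiniteIndex }

section Solenoid

variable (G Xt : Type*) [Group G] [TopologicalSpace Xt] [MulAction G Xt]

/-- The cover of `X` corresponding to a subgroup `H ≤ G = π₁(X)`: the quotient
`H \\ X̃` of the universal cover by the subgroup `H` of the deck group. -/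
def SubCover (H : Subgroup G) := Quotient (MulAction.orbitRel H Xt)

instance (H : Subgroup G) : TopologicalSpace (SubCover G Xt H) :=
  instTopologicalSpaceQuotient

/-- The covering projection `X_H → X_K` for nested subgroups `H ≤ K`. -/
def coverProj {H K : Subgroup G} (hHK : H ≤ K) : SubCover G Xt H → SubCover G Xt K :=
  Quotient.map id fun a b hab => by
    obtain ⟨g, hg⟩ := hab
    exact ⟨⟨g.1, hHK g.2⟩, hg⟩

/-- The full solenoid over `X`: the inverse limit of the system of all covers `X_H` of
`X` over finite-index subgroups `H ≤ π₁(X)`, with bonding maps the covering projections. -/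
def FullSolenoid : Type _ :=
  { u : ∀ H : FIdx G, SubCover G Xt H.1 //
    ∀ (H K : FIdx G) (h : H.1 ≤ K.1), coverProj G Xt h (u H) = u K }

instance : TopologicalSpace (FullSolenoid G Xt) :=
  instTopologicalSpaceSubtype

/-- The canonical baseleaf map `X̃ → sol X` induced by the covering maps `X̃ → X_H`. -/
def baseleaf : Xt → FullSolenoid G Xt := fun x =>
  ⟨fun H => Quotient.mk _ x, fun H K h => rfl⟩

/-- The canonical projection `sol X → X` (via the cover corresponding to the whole
group, which is identified with `X` by the covering projection `p`). -/
def solProj {X : Type*} (p : Xt → X) (hdeck : ∀ (g : G) (x : Xt), p (g • x) = p x)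
    (u : FullSolenoid G Xt) : X :=
  Quotient.lift p (fun a b hab => by
    obtain ⟨g, hg⟩ := hab
    rw [← hg]; exact hdeck g.1 b) (u.1 ⟨⊤, inferInstance⟩)

end Solenoid


/-- **Statement 4.** If `(X,∗)` is an unloopable pointed topological space whose
fundamental group is residually finite, then the baseleaf map `ℓ : X̃ → sol X` is
injective with dense image. -/theorem baseleaf_injective_denseRange
    (X Xt G : Type*) [TopologicalSpace X] [TopologicalSpace Xt]
    [PathConnectedSpace X] [LocallyPathConnectedSpace X]
    [SimplyConnectedSpace Xt] [LocallyPathConnectedSpace Xt]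
    (p : Xt → X) (hcov : IsCoveringMap p)
    [Group G] [MulAction G Xt]
    (hcont : ∀ g : G, Continuous fun x : Xt => g • x)
    (hdeck : ∀ (g : G) (x : Xt), p (g • x) = p x)
    (hfib : ∀ x y : Xt, p x = p y → ∃ g : G, g • x = y)
    (hfree : ∀ (g : G) (x : Xt), g • x = x → g = 1)
    (x₀ : X) (xt₀ : Xt) (hx₀ : p xt₀ = x₀) (e : G ≃* FundamentalGroup X x₀)
    (hRF : (⨅ (H : Subgroup G) (_ : H.FiniteIndex), H) = ⊥) :
    Function.Injective (baseleaf G Xt) ∧ DenseRange (baseleaf G Xt) := by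
  constructor
  · intro x y hxy
    have key : ∀ H : Subgroup G, H.FiniteIndex → ∃ h : G, h ∈ H ∧ h • y = x := by
      intro H hH
      have h1 := congrFun (congrArg Subtype.val hxy) ⟨H, hH⟩
      obtain ⟨h, hh⟩ := Quotient.exact h1
      exact ⟨(h : G), h.2, hh⟩
    obtain ⟨g, -, hg⟩ := key ⊤ inferInstance
    have hmem : g ∈ ⨅ (H : Subgroup G) (_ : H.FiniteIndex), H := by
      simp only [Subgroup.mem_iInf]
      intro H hH
      obtain ⟨h, hhH, hh⟩ := key H hH
      have heq : (g⁻¹ * h) • y = y := by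
        rw [mul_smul, hh, ← hg, inv_smul_smul]
      have := hfree _ _ heq
      have : h = g := by
        rwa [inv_mul_eq_one, eq_comm] at this
      rwa [this] at hhH
    rw [hRF, Subgroup.mem_bot] at hmem
    rw [← hg, hmem, one_smul]
  · intro u
    rw [mem_closure_iff]
    intro o ho huo
    obtain ⟨O, hO, rfl⟩ := isOpen_induced_iff.mp ho
    rw [isOpen_pi_iff] at hO
    obtain ⟨I, V, hV, hVO⟩ := hO u.1 huo
    have hH : (⨅ i ∈ I, (i : FIdx G).1).FiniteIndex :=
      Subgroup.finiteIndex_iInf' _ fun i _ => i.2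
    set H : FIdx G := ⟨⨅ i ∈ I, (i : FIdx G).1, hH⟩ with hHdef
    obtain ⟨x, hx⟩ := Quotient.exists_rep (u.1 H)
    refine ⟨baseleaf G Xt x, ?_, ⟨x, rfl⟩⟩
    apply hVO
    intro i hi
    have hle : H.1 ≤ i.1 := biInf_le _ hi
    have h2 : coverProj G Xt hle (u.1 H) = u.1 i := u.2 H i hle
    have h3 : (baseleaf G Xt x).1 i = u.1 i := by
      rw [← h2, ← hx]; rfl
    rw [h3]
    exact (hV i hi).2
end

section
/- Suppose X is an unloopable compact geodesic metric space with residually finite, finitely generated fundamental group G = π₁(X,∗), and suppose 0 < ε < injrad(X)/4. Then for every point x̂ = [(γ,x)] of the quotient (Ĝ × X̃)/G with its quotient metric σ, the σ-ball B_σ(x̂, ε) is isometric to the ℓ∞ product B_{d̂}(γ,ε) × B_{d_X}(x,ε); in particular, every path component of B_σ(x̂, ε) is isometric to the ball B_{d_X}(x, ε) in X̃. -/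
open scoped Classical

/-- The intersection `G_{≤n}` of all subgroups of `G` of (finite) index at most `n`. -/
def subLE (G : Type*) [Group G] (n : ℕ) : Subgroup G :=
  ⨅ (H : Subgroup G) (_ : H.FiniteIndex ∧ H.index ≤ n), H

/-- The profinite pseudometric `d̂` on a group `G`. -/
noncomputable def dhat (G : Type*) [Group G] (g₁ g₂ : G) : ℝ :=
  if ∀ H : Subgroup G, H.FiniteIndex → g₁ * g₂⁻¹ ∈ H then 0
  else Real.exp (-(sSup {n : ℕ | g₁ * g₂⁻¹ ∈ subLE G n} : ℕ))

/-- A metric space is geodesic if any two points are joined by an isometrically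
embedded segment. -/
def IsGeodesicMetricSpace (X : Type*) [MetricSpace X] : Prop :=
  ∀ x y : X, ∃ f : ℝ → X, f 0 = x ∧ f (dist x y) = y ∧
    ∀ s ∈ Set.Icc (0 : ℝ) (dist x y), ∀ t ∈ Set.Icc (0 : ℝ) (dist x y),
      dist (f s) (f t) = |s - t|

/-- The injectivity radius of a covering projection `p : X̃ → X`. -/
noncomputable def injrad {X Xt : Type*} [MetricSpace X] [MetricSpace Xt] (p : Xt → X) : ℝ :=
  sSup {R : ℝ | 0 ≤ R ∧ ∀ x : Xt, ∀ y ∈ Metric.ball x R, ∀ z ∈ Metric.ball x R,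
    dist (p y) (p z) = dist y z}

section MetricSolenoid

variable {G Ghat Xt : Type*} [Group G] [MulAction G Xt]

/-- The orbit equivalence relation for the diagonal `G`-action
`g · (γ, x) = (γ·ĝ⁻¹, g·x)` on `Ĝ × X̃`, where the action on the first factor is
specified by `act`. -/
def solRel (act : G → Ghat → Ghat) (p q : Ghat × Xt) : Prop :=
  ∃ g : G, act g p.1 = q.1 ∧ g • p.2 = q.2

/-- The metric model of the full solenoid: the quotient `(Ĝ × X̃)/G`. -/
def MSol (act : G → Ghat → Ghat) := Quot (solRel (Xt := Xt) act)

variable [MetricSpace Ghat] [MetricSpace Xt]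

instance (act : G → Ghat → Ghat) : TopologicalSpace (MSol (Xt := Xt) act) :=
  instTopologicalSpaceQuot

/-- The solenoid (quotient) metric `σ` on `(Ĝ × X̃)/G`: the infimum of the `ℓ∞` product
distance over orbit representatives. -/
noncomputable def msodist (act : G → Ghat → Ghat) (u v : MSol (Xt := Xt) act) : ℝ :=
  sInf {r : ℝ | ∃ a b : Ghat × Xt, Quot.mk _ a = u ∧ Quot.mk _ b = v ∧ dist a b = r}

/-- The baseleaf map `X̃ → (Ĝ × X̃)/G`, `x ↦ [(1̂, x)]`. -/
def mleaf (act : G → Ghat → Ghat) (ι : G → Ghat) (x : Xt) : MSol (Xt := Xt) act :=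
  Quot.mk _ (ι 1, x)

/-- The basepoint `[(1̂, ∗̃)]` of the metric solenoid. -/
def mpt (act : G → Ghat → Ghat) (ι : G → Ghat) (xt₀ : Xt) : MSol (Xt := Xt) act :=
  mleaf act ι xt₀

/-- The baseleaf restriction `f_X̃` of a self-map `f` of the solenoid: the restriction
of `f` to the (injectively embedded) baseleaf `X̃ ⊆ (Ĝ × X̃)/G`. -/
noncomputable def leafRestrict [Nonempty Xt] (act : G → Ghat → Ghat) (ι : G → Ghat)
    (f : MSol (Xt := Xt) act → MSol (Xt := Xt) act) : Xt → Xt :=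
  fun x => Function.invFun (mleaf act ι) (f (mleaf act ι x))

end MetricSolenoid




/-- Gap principle: a continuous real function on a preconnected set that avoids an
interval `(c,d)` and starts `≤ c` stays `≤ c`. -/
lemma gap_principle' {α : Type*} [TopologicalSpace α] {s : Set α} (hs : IsPreconnected s)
    {v : α → ℝ} (hv : ContinuousOn v s) {c d : ℝ} (hcd : c < d)
    (hgap : ∀ b ∈ s, v b ∉ Set.Ioo c d) {a : α} (ha : a ∈ s) (hva : v a ≤ c) :
    ∀ b ∈ s, v b ≤ c := by
  intro b hb
  by_contra hcon
  push_neg at hcon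
  have hvb : d ≤ v b := by
    rcases lt_or_ge (v b) d with h' | h'
    · exact absurd ⟨hcon, h'⟩ (hgap b hb)
    · exact h'
  have himg := (hs.image v hv).ordConnected
  obtain ⟨y, hy, hvy⟩ := himg.out ⟨a, ha, rfl⟩ ⟨b, hb, rfl⟩
      (⟨by linarith, by linarith⟩ : (c + d) / 2 ∈ Set.Icc (v a) (v b))
  refine hgap y hy ?_
  rw [hvy]
  constructor <;> linarith

lemma dhat_shape' (G : Type*) [Group G] (g h : G) :
    dhat G g h = 0 ∨ ∃ m : ℕ, dhat G g h = Real.exp (-(m : ℝ)) := by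
  unfold dhat
  split_ifs with h'
  · exact Or.inl rfl
  · exact Or.inr ⟨_, rfl⟩

/-- In a space where all distances avoid the gaps `(e^{-n-1}, e^{-n})`, any continuous
map from the unit interval is constant. -/
lemma path_const' {Ghat : Type*} [MetricSpace Ghat]
    (hgapG : ∀ (α α' : Ghat) (n : ℕ),
      dist α α' ∉ Set.Ioo (Real.exp (-(n : ℝ) - 1)) (Real.exp (-(n : ℝ))))
    {F : unitInterval → Ghat} (hF : Continuous F) (t : unitInterval) : F t = F 0 := by
  by_contra hne
  have hυ0 : 0 < dist (F t) (F 0) := dist_pos.mpr hne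
  set υ := dist (F t) (F 0) with hυ
  set n : ℕ := ⌊-Real.log υ⌋₊ + 1 with hn
  have hn1 : -Real.log υ < (n : ℝ) := by
    have := Nat.lt_floor_add_one (-Real.log υ)
    rw [hn]
    push_cast
    linarith
  have hexp : Real.exp (-(n : ℝ)) < υ := by
    calc Real.exp (-(n : ℝ)) < Real.exp (Real.log υ) := Real.exp_lt_exp.mpr (by linarith)
    _ = υ := Real.exp_log hυ0
  have hle := gap_principle' (isPreconnected_univ (α := unitInterval))
    ((hF.dist continuous_const).continuousOn)
    (show Real.exp (-(n : ℝ) - 1) < Real.exp (-(n : ℝ)) from Real.exp_lt_exp.mpr (by linarith))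
    (fun b _ => hgapG (F b) (F 0) n) (Set.mem_univ 0)
    (by simp [(Real.exp_pos _).le])
  have h1 := hle t (Set.mem_univ t)
  have h2 : Real.exp (-(n : ℝ) - 1) < Real.exp (-(n : ℝ)) := Real.exp_lt_exp.mpr (by linarith)
  rw [← hυ] at h1
  linarith

/-- **Statement 7.** Small metric balls in the solenoid `(Ĝ × X̃)/G` with the quotient
metric `σ` split isometrically as `ℓ∞` products `B_{d̂}(γ,ε) × B_{d_X}(x,ε)`; in
particular each path component of such a ball is isometric to `B_{d_X}(x,ε) ⊆ X̃`. -/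
theorem solenoid_small_balls_product
    (X Xt G Ghat : Type*) [MetricSpace X] [MetricSpace Xt] [MetricSpace Ghat]
    [CompactSpace X] [CompactSpace Ghat] [CompleteSpace Ghat] [Nonempty Xt]
    [PathConnectedSpace X] [LocallyPathConnectedSpace X]
    [SimplyConnectedSpace Xt] [LocallyPathConnectedSpace Xt]
    [Group G] [Group.FG G] [MulAction G Xt]
    (hgeo : IsGeodesicMetricSpace X)
    (p : Xt → X) (hcov : IsCoveringMap p)
    (hloc : ∀ xt : Xt, ∃ ε > 0, ∀ y ∈ Metric.ball xt ε, ∀ z ∈ Metric.ball xt ε,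
      dist (p y) (p z) = dist y z)
    (hiso : ∀ g : G, Isometry fun x : Xt => g • x)
    (hdeck : ∀ (g : G) (x : Xt), p (g • x) = p x)
    (hfib : ∀ x y : Xt, p x = p y → ∃ g : G, g • x = y)
    (hfree : ∀ (g : G) (x : Xt), g • x = x → g = 1)
    (x₀ : X) (xt₀ : Xt) (hx₀ : p xt₀ = x₀) (e : G ≃* FundamentalGroup X x₀)
    (hRF : (⨅ (H : Subgroup G) (_ : H.FiniteIndex), H) = ⊥)
    (ι : G → Ghat) (hι : ∀ g h : G, dist (ι g) (ι h) = dhat G g h)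
    (hdense : DenseRange ι)
    (act : G → Ghat → Ghat)
    (hact1 : ∀ γ : Ghat, act 1 γ = γ)
    (hactmul : ∀ (g h : G) (γ : Ghat), act g (act h γ) = act (g * h) γ)
    (hactiso : ∀ g : G, Isometry (act g))
    (hactι : ∀ g h : G, act g (ι h) = ι (h * g⁻¹))
    (ε : ℝ) (hε0 : 0 < ε) (hε : ε < injrad p / 4) (γ : Ghat) (x : Xt) :
    (∃ eqv : { v : MSol (Xt := Xt) act // msodist act (Quot.mk _ (γ, x)) v < ε } ≃
        ↥((Metric.ball γ ε ×ˢ Metric.ball x ε : Set (Ghat × Xt))),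
      ∀ u v, msodist act u.1 v.1 = dist (eqv u : Ghat × Xt) (eqv v : Ghat × Xt)) ∧
    (∀ v : { v : MSol (Xt := Xt) act // msodist act (Quot.mk _ (γ, x)) v < ε },
      ∃ eqv' : ↥(pathComponent v) ≃ ↥(Metric.ball x ε),
        ∀ a b : ↥(pathComponent v),
          msodist act a.1.1 b.1.1 = dist (eqv' a : Xt) (eqv' b : Xt)) := by
  classical
  -- notation
  set Bset : Set (Ghat × Xt) := Metric.ball γ ε ×ˢ Metric.ball x ε with hBset
  have hBmem : ∀ b : Ghat × Xt, b ∈ Bset ↔ dist b.1 γ < ε ∧ dist b.2 x < ε := by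
    intro b
    rw [hBset, Set.mem_prod, Metric.mem_ball, Metric.mem_ball]
  -- the injectivity radius set
  have hbig : 4 * ε < injrad p := by linarith
  obtain ⟨R, hRS, hR4⟩ : ∃ R, (0 ≤ R ∧ ∀ w : Xt, ∀ y ∈ Metric.ball w R, ∀ z ∈ Metric.ball w R,
      dist (p y) (p z) = dist y z) ∧ 4 * ε < R := by
    set S : Set ℝ := {R : ℝ | 0 ≤ R ∧ ∀ x : Xt, ∀ y ∈ Metric.ball x R, ∀ z ∈ Metric.ball x R,
      dist (p y) (p z) = dist y z} with hSdef
    have hinj : injrad p = sSup S := rfl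
    have hS0 : (0 : ℝ) ∈ S := by
      refine ⟨le_refl 0, fun w y hy z hz => ?_⟩
      rw [Metric.ball_zero] at hy
      exact absurd hy (Set.notMem_empty y)
    have hbdd : BddAbove S := by
      by_contra hb
      rw [hinj, Real.sSup_of_not_bddAbove hb] at hbig
      linarith
    obtain ⟨R, hRS, hR⟩ := exists_lt_of_lt_csSup ⟨0, hS0⟩ (by rw [hinj] at hbig; exact hbig)
    exact ⟨R, hRS, hR⟩
  have hRpos : 0 < R := by linarith
  have hpiso : ∀ w y z : Xt, dist w y < R → dist w z < R → dist (p y) (p z) = dist y z := by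
    intro w y z hy hz
    exact hRS.2 w y (by rwa [Metric.mem_ball, dist_comm]) z (by rwa [Metric.mem_ball, dist_comm])
  have hsep : ∀ (g : G) (w : Xt), g ≠ 1 → R ≤ dist w (g • w) := by
    intro g w hg
    by_contra h
    push_neg at h
    have h0 := hpiso w w (g • w) (by simpa using hRpos) h
    rw [hdeck, dist_self] at h0
    exact hg (hfree g w (dist_eq_zero.mp h0.symm).symm)
  -- the equivalence relation
  have hequiv : Equivalence (solRel (Xt := Xt) act) := by
    constructor
    · intro a
      exact ⟨1, by rw [hact1], one_smul _ _⟩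
    · rintro a b ⟨g, h1, h2⟩
      exact ⟨g⁻¹, by rw [← h1, hactmul, inv_mul_cancel, hact1],
        by rw [← h2, ← mul_smul, inv_mul_cancel, one_smul]⟩
    · rintro a b c ⟨g, h1, h2⟩ ⟨g', h1', h2'⟩
      exact ⟨g' * g, by rw [← hactmul, h1, h1'], by rw [mul_smul, h2, h2']⟩
  have hrel : ∀ a b : Ghat × Xt, Quot.mk (solRel (Xt := Xt) act) a = Quot.mk _ b ↔
      ∃ g : G, act g a.1 = b.1 ∧ g • a.2 = b.2 := by
    intro a b
    rw [Quot.eq, hequiv.eqvGen_iff]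
    rfl
  have hcancel : ∀ (g : G) (a : Ghat × Xt), (act g⁻¹ (act g a.1), g⁻¹ • (g • a.2)) = a := by
    intro g a
    rw [hactmul, inv_mul_cancel, hact1, ← mul_smul, inv_mul_cancel, one_smul]
  have hcancel2 : ∀ (g : G) (a : Ghat × Xt), (act g (act g⁻¹ a.1), g • (g⁻¹ • a.2)) = a := by
    intro g a
    rw [hactmul, mul_inv_cancel, hact1, ← mul_smul, mul_inv_cancel, one_smul]
  have hgdist : ∀ (g : G) (a b : Ghat × Xt),
      dist ((act g a.1, g • a.2) : Ghat × Xt) (act g b.1, g • b.2) = dist a b := by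
    intro g a b
    rw [Prod.dist_eq, Prod.dist_eq, (hactiso g).dist_eq, (hiso g).dist_eq]
  -- the distance lower bound for translated representatives
  have hlow : ∀ (k : G) (a b : Ghat × Xt), a ∈ Bset → b ∈ Bset →
      dist a b ≤ dist a (act k b.1, k • b.2) := by
    intro k a b ha hb
    rcases eq_or_ne k 1 with rfl | hk
    · rw [hact1, one_smul]
    · have ha' := (hBmem a).mp ha
      have hb' := (hBmem b).mp hb
      have h1 : dist (k • b.2) (k • x) = dist b.2 x := (hiso k).dist_eq _ _
      have h2 : R ≤ dist x (k • x) := hsep k x hk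
      have h3 : dist x (k • x) ≤ dist x a.2 + dist a.2 (k • b.2) + dist (k • b.2) (k • x) :=
        dist_triangle4 _ _ _ _
      have h4 : R - 2 * ε ≤ dist a.2 (k • b.2) := by
        rw [h1] at h3
        have := ha'.2
        rw [dist_comm] at this
        linarith [hb'.2]
      have h5 : dist a b < 2 * ε := by
        calc dist a b ≤ dist a (γ, x) + dist (γ, x) b := dist_triangle _ _ _
        _ < ε + ε := by
            refine add_lt_add ?_ ?_
            · rw [Prod.dist_eq]
              exact max_lt ha'.1 ha'.2
            · rw [Prod.dist_eq, dist_comm γ b.1, dist_comm x b.2]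
              exact max_lt hb'.1 hb'.2
        _ = 2 * ε := by ring
      have h6 : dist a.2 (k • b.2) ≤ dist a (act k b.1, k • b.2) := by
        rw [Prod.dist_eq]
        exact le_max_right _ _
      linarith
  -- the quotient map
  set q : Ghat × Xt → MSol (Xt := Xt) act := Quot.mk _ with hq
  have hzero : ∀ u : MSol (Xt := Xt) act, msodist act u u = 0 := by
    intro u
    obtain ⟨c, rfl⟩ := Quot.exists_rep u
    unfold msodist
    refine IsLeast.csInf_eq ⟨⟨c, c, rfl, rfl, dist_self c⟩, ?_⟩
    rintro r ⟨a', b', _, _, rfl⟩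
    exact dist_nonneg
  -- representation of other representatives
  have hrep : ∀ a a' : Ghat × Xt, Quot.mk (solRel (Xt := Xt) act) a' = Quot.mk _ a →
      ∃ g : G, (act g a'.1, g • a'.2) = a := by
    intro a a' h
    obtain ⟨g, h1, h2⟩ := (hrel a' a).mp h
    exact ⟨g, by rw [h1, h2]⟩
  -- the main distance formula
  have hmain : ∀ a b : Ghat × Xt, a ∈ Bset → b ∈ Bset → msodist act (q a) (q b) = dist a b := by
    intro a b ha hb
    unfold msodist
    refine IsLeast.csInf_eq ⟨⟨a, b, rfl, rfl, rfl⟩, ?_⟩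
    rintro r ⟨a', b', ha', hb', rfl⟩
    obtain ⟨g, hga⟩ := hrep a a' ha'
    obtain ⟨h, hhb⟩ := hrep b b' hb'
    have e1 : dist a' b' = dist ((act g a'.1, g • a'.2) : Ghat × Xt) (act g b'.1, g • b'.2) :=
      (hgdist g a' b').symm
    have e2 : b' = ((act h⁻¹ b.1, h⁻¹ • b.2) : Ghat × Xt) := by
      rw [← hhb]
      exact (hcancel h b').symm
    have e3 : ((act g (act h⁻¹ b.1), g • (h⁻¹ • b.2)) : Ghat × Xt)
        = (act (g * h⁻¹) b.1, (g * h⁻¹) • b.2) := by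
      rw [hactmul, mul_smul]
    calc dist a b ≤ dist a (act (g * h⁻¹) b.1, (g * h⁻¹) • b.2) := hlow _ a b ha hb
    _ = dist a' b' := by rw [e1, hga, e2, e3]
  have hcenter : ((γ, x) : Ghat × Xt) ∈ Bset := by
    rw [hBmem]
    simp [hε0]
  have hballmem : ∀ b ∈ Bset, msodist act (q (γ, x)) (q b) < ε := by
    intro b hb
    rw [hmain _ _ hcenter hb, Prod.dist_eq]
    have hb' := (hBmem b).mp hb
    rw [dist_comm γ b.1, dist_comm x b.2]
    exact max_lt hb'.1 hb'.2
  have hinjB : ∀ a ∈ Bset, ∀ b ∈ Bset, q a = q b → a = b := by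
    intro a ha b hb h
    have h0 : msodist act (q a) (q b) = 0 := by rw [h, hzero]
    rw [hmain a b ha hb] at h0
    exact dist_eq_zero.mp h0
  have hsurjB : ∀ v : MSol (Xt := Xt) act, msodist act (q (γ, x)) v < ε → ∃ b ∈ Bset, q b = v := by
    intro v hv
    obtain ⟨c, rfl⟩ := Quot.exists_rep v
    unfold msodist at hv
    have hne : {r : ℝ | ∃ a b : Ghat × Xt, Quot.mk (solRel act) a = q (γ, x) ∧
        Quot.mk (solRel act) b = Quot.mk (solRel act) c ∧ dist a b = r}.Nonempty :=
      ⟨dist ((γ, x) : Ghat × Xt) c, (γ, x), c, rfl, rfl, rfl⟩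
    obtain ⟨r, hrT, hrε⟩ := exists_lt_of_csInf_lt hne hv
    obtain ⟨a', b', ha', hb', rfl⟩ := hrT
    obtain ⟨g, hga⟩ := hrep (γ, x) a' ha'
    refine ⟨(act g b'.1, g • b'.2), ?_, ?_⟩
    · have hd : dist ((γ, x) : Ghat × Xt) (act g b'.1, g • b'.2) = dist a' b' := by
        rw [← hga]
        exact hgdist g a' b'
      rw [hBmem]
      constructor
      · have h' : dist γ (act g b'.1) ≤ dist ((γ, x) : Ghat × Xt) (act g b'.1, g • b'.2) := by
          rw [Prod.dist_eq]
          exact le_max_left _ _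
        rw [hd] at h'
        show dist (act g b'.1) γ < ε
        rw [dist_comm]
        linarith
      · have h' : dist x (g • b'.2) ≤ dist ((γ, x) : Ghat × Xt) (act g b'.1, g • b'.2) := by
          rw [Prod.dist_eq]
          exact le_max_right _ _
        rw [hd] at h'
        show dist (g • b'.2) x < ε
        rw [dist_comm]
        linarith
    · rw [← hb']
      exact ((hrel b' (act g b'.1, g • b'.2)).mpr ⟨g, rfl, rfl⟩).symm
  -- Part 1: the product structure of the ball
  set f : Bset → { v : MSol (Xt := Xt) act // msodist act (Quot.mk _ (γ, x)) v < ε } :=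
    fun b => ⟨q b.1, hballmem b.1 b.2⟩ with hf
  have hfbij : Function.Bijective f := by
    constructor
    · intro a b hab
      exact Subtype.ext (hinjB a.1 a.2 b.1 b.2 (congrArg Subtype.val hab))
    · intro w
      obtain ⟨b, hb, hqb⟩ := hsurjB w.1 w.2
      exact ⟨⟨b, hb⟩, Subtype.ext hqb⟩
  set eqv := (Equiv.ofBijective f hfbij).symm with heqv
  have heqvq : ∀ w : { v : MSol (Xt := Xt) act // msodist act (Quot.mk _ (γ, x)) v < ε },
      q ((eqv w : Ghat × Xt)) = w.1 ∧ ((eqv w : Ghat × Xt)) ∈ Bset := by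
    intro w
    have := (Equiv.ofBijective f hfbij).apply_symm_apply w
    exact ⟨congrArg Subtype.val this, (eqv w).2⟩
  refine ⟨⟨eqv, ?_⟩, ?_⟩
  · intro u w
    have hu := (heqvq u).1
    have hw := (heqvq w).1
    rw [← hu, ← hw]
    exact hmain _ _ (heqvq u).2 (heqvq w).2
  -- gap structure of distances in Ghat
  have hgapG : ∀ (α α' : Ghat) (n : ℕ),
      dist α α' ∉ Set.Ioo (Real.exp (-(n : ℝ) - 1)) (Real.exp (-(n : ℝ))) := by
    intro α α' n hmemIoo
    obtain ⟨hA, hB⟩ := hmemIoo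
    set δ := min (dist α α' - Real.exp (-(n : ℝ) - 1)) (Real.exp (-(n : ℝ)) - dist α α')
      with hδdef
    have hδ0 : 0 < δ := lt_min (by linarith) (by linarith)
    obtain ⟨g, hg⟩ := hdense.exists_dist_lt α (show (0:ℝ) < δ / 2 by linarith)
    obtain ⟨h, hh⟩ := hdense.exists_dist_lt α' (show (0:ℝ) < δ / 2 by linarith)
    have hdd : dist (dist (ι g) (ι h)) (dist α α') ≤ dist (ι g) α + dist (ι h) α' :=
      dist_dist_dist_le _ _ _ _
    rw [Real.dist_eq, dist_comm (ι g) α, dist_comm (ι h) α'] at hdd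
    have habs : |dist (ι g) (ι h) - dist α α'| < δ := by linarith
    rw [abs_sub_lt_iff] at habs
    have hmin1 : δ ≤ dist α α' - Real.exp (-(n : ℝ) - 1) := min_le_left _ _
    have hmin2 : δ ≤ Real.exp (-(n : ℝ)) - dist α α' := min_le_right _ _
    have hIoo : dist (ι g) (ι h) ∈ Set.Ioo (Real.exp (-(n : ℝ) - 1)) (Real.exp (-(n : ℝ))) :=
      ⟨by linarith, by linarith⟩
    rw [hι g h] at hIoo
    rcases dhat_shape' G g h with h0 | ⟨mm, hmm⟩
    · rw [h0] at hIoo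
      exact absurd hIoo.1 (not_lt.mpr (Real.exp_pos _).le)
    · rw [hmm] at hIoo
      have h1 : -(n : ℝ) - 1 < -(mm : ℝ) := Real.exp_lt_exp.mp hIoo.1
      have h2 : -(mm : ℝ) < -(n : ℝ) := Real.exp_lt_exp.mp hIoo.2
      have h3 : (n : ℝ) < mm := by linarith
      have h4 : (mm : ℝ) < n + 1 := by linarith
      have h5 : n < mm := by exact_mod_cast h3
      have h6 : mm < n + 1 := by exact_mod_cast h4
      omega
  -- the quotient map is open
  have hBopen : IsOpen Bset := by
    rw [hBset]
    exact Metric.isOpen_ball.prod Metric.isOpen_ball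
  have hope : IsOpenMap q := by
    intro U hU
    refine (isQuotientMap_quot_mk (r := solRel (Xt := Xt) act)).isOpen_preimage.mp (?_ : IsOpen (q ⁻¹' (q '' U)))
    have himg : q ⁻¹' (q '' U) = ⋃ g : G, (fun c : Ghat × Xt => (act g c.1, g • c.2)) '' U := by
      ext c
      simp only [Set.mem_preimage, Set.mem_image, Set.mem_iUnion]
      constructor
      · rintro ⟨u, hu, huc⟩
        obtain ⟨g, hgc⟩ := hrep c u huc
        exact ⟨g, u, hu, hgc⟩
      · rintro ⟨g, u, hu, rfl⟩
        exact ⟨u, hu, (hrel u (act g u.1, g • u.2)).mpr ⟨g, rfl, rfl⟩⟩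
    rw [himg]
    refine isOpen_iUnion fun g => ?_
    have himg2 : (fun c : Ghat × Xt => (act g c.1, g • c.2)) '' U
        = (fun c : Ghat × Xt => (act g⁻¹ c.1, g⁻¹ • c.2)) ⁻¹' U := by
      ext c
      simp only [Set.mem_image, Set.mem_preimage]
      constructor
      · rintro ⟨u, hu, rfl⟩
        show (act g⁻¹ (act g u.1), g⁻¹ • (g • u.2)) ∈ U
        rw [show ((act g⁻¹ (act g u.1), g⁻¹ • (g • u.2)) : Ghat × Xt) = u from hcancel g u]
        exact hu
      · intro hc
        exact ⟨(act g⁻¹ c.1, g⁻¹ • c.2), hc, hcancel2 g c⟩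
    rw [himg2]
    exact hU.preimage (((hactiso g⁻¹).continuous.comp continuous_fst).prodMk
      ((hiso g⁻¹).continuous.comp continuous_snd))
  -- the representative map is continuous
  set r : { v : MSol (Xt := Xt) act // msodist act (Quot.mk _ (γ, x)) v < ε } → Ghat × Xt :=
    fun w => (eqv w : Ghat × Xt) with hrdef
  have hrq : ∀ w, q (r w) = w.1 := fun w => (heqvq w).1
  have hrB : ∀ w, r w ∈ Bset := fun w => (heqvq w).2
  have hrcont : Continuous r := by
    rw [continuous_def]
    intro U hU
    have hpre : r ⁻¹' U = Subtype.val ⁻¹' (q '' (U ∩ Bset)) := by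
      ext w
      simp only [Set.mem_preimage, Set.mem_image]
      constructor
      · intro hw
        exact ⟨r w, ⟨hw, hrB w⟩, hrq w⟩
      · rintro ⟨u, ⟨hu, huB⟩, hqu⟩
        have heq : u = r w := hinjB u huB (r w) (hrB w) (by rw [hqu, hrq w])
        rwa [← heq]
    rw [hpre]
    exact ((hope (U ∩ Bset) (hU.inter hBopen)).preimage continuous_subtype_val)
  -- star-shapedness of small balls in Xt (via geodesic lifting)
  have hlift : ∀ z : Xt, dist x z < ε → JoinedIn (Metric.ball x ε) z x := by
    intro z hz
    have hzR : dist z x < R := by rw [dist_comm]; linarith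
    have hLeq : dist (p z) (p x) = dist z x := hpiso z z x (by simpa using hRpos) hzR
    set L := dist (p z) (p x) with hLdef
    have hL0 : 0 ≤ L := dist_nonneg
    have hLε : L < ε := by rw [hLeq, dist_comm]; exact hz
    obtain ⟨f₀, hf0, hfL, hfiso⟩ := hgeo (p z) (p x)
    rw [← hLdef] at hfL
    have hfcont : ContinuousOn f₀ (Set.Icc (0:ℝ) L) := by
      rw [Metric.continuousOn_iff]
      intro b0 hb0 δ hδ
      refine ⟨δ, hδ, fun a ha hab => ?_⟩
      rw [hfiso a ha b0 hb0, ← Real.dist_eq]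
      exact hab
    -- witnesses for every parameter value
    have hwit : ∀ s₁ ∈ Set.Icc (0:ℝ) L, ∃ w : Xt, dist z w = s₁ ∧ p w = f₀ s₁ := by
      intro s₁ hs₁
      set T : Set ℝ := {s : ℝ | s ∈ Set.Icc 0 s₁ ∧ ∃ w : Xt, dist z w = s ∧ p w = f₀ s} with hT
      have h0T : (0:ℝ) ∈ T := ⟨⟨le_refl 0, hs₁.1⟩, z, dist_self z, by rw [hf0]⟩
      have hTbdd : BddAbove T := ⟨s₁, fun s hs => hs.1.2⟩
      have hTne : T.Nonempty := ⟨0, h0T⟩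
      set s₀ := sSup T with hs₀
      have hs₀0 : 0 ≤ s₀ := le_csSup hTbdd h0T
      have hs₀1 : s₀ ≤ s₁ := csSup_le hTne fun s hs => hs.1.2
      have hIccsub : Set.Icc (0:ℝ) s₁ ⊆ Set.Icc (0:ℝ) L :=
        Set.Icc_subset_Icc (le_refl 0) hs₁.2
      have hs₀L : s₀ ∈ Set.Icc (0:ℝ) L := hIccsub ⟨hs₀0, hs₀1⟩
      have hec := hcov (f₀ s₀)
      haveI : Nonempty (p ⁻¹' {f₀ s₀}) := by
        obtain ⟨Γ, hΓ, -⟩ := hcov.exists_path_lifts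
          (Joined.somePath (PathConnectedSpace.joined (p z) (f₀ s₀))).toContinuousMap z (by simp)
        exact ⟨⟨Γ 1, by have := congrFun hΓ 1; simpa using this⟩⟩
      set e := hec.toTrivialization with he
      have hbase : f₀ s₀ ∈ e.baseSet := hec.mem_toTrivialization_baseSet
      obtain ⟨η, hη0, hηsub⟩ := Metric.isOpen_iff.mp e.open_baseSet (f₀ s₀) hbase
      have hfb : ∀ s' ∈ Set.Icc (0:ℝ) s₁, |s' - s₀| < η → f₀ s' ∈ e.baseSet := by
        intro s' hs' hd
        apply hηsub
        rw [Metric.mem_ball,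
          show dist (f₀ s') (f₀ s₀) = |s' - s₀| from hfiso s' (hIccsub hs') s₀ hs₀L]
        exact hd
      obtain ⟨s, hsT, hss⟩ := exists_lt_of_lt_csSup hTne
        (show s₀ - η / 2 < sSup T by rw [← hs₀]; linarith)
      obtain ⟨⟨hs0, hss₁⟩, w, hwd, hwp⟩ := hsT
      have hsle : s ≤ s₀ := le_csSup hTbdd ⟨⟨hs0, hss₁⟩, w, hwd, hwp⟩
      have habs : |s - s₀| < η := by
        rw [abs_sub_lt_iff]
        constructor <;> linarith
      have hwsrc : w ∈ e.source := e.mem_source.mpr (by rw [hwp]; exact hfb s ⟨hs0, hss₁⟩ habs)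
      set i := (e w).2 with hi
      set W : ℝ → Xt := fun s' => e.toOpenPartialHomeomorph.symm (f₀ s', i) with hWdef
      have hWs : W s = w := by
        have h1 : e w = (f₀ s, i) := by
          rw [← e.mk_proj_snd hwsrc, hwp]
        show e.toOpenPartialHomeomorph.symm (f₀ s, i) = w
        rw [← h1]
        exact e.toOpenPartialHomeomorph.left_inv hwsrc
      set m := min s₁ (s₀ + η / 2) with hm
      have hsm : s ≤ m := le_min hss₁ (by linarith)
      have hJsub : ∀ s' ∈ Set.Icc s m, s' ∈ Set.Icc (0:ℝ) s₁ ∧ |s' - s₀| < η := by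
        rintro s' ⟨h1, h2⟩
        refine ⟨⟨le_trans hs0 h1, le_trans h2 (min_le_left _ _)⟩, ?_⟩
        have h3 := le_trans h2 (min_le_right _ _)
        rw [abs_sub_lt_iff]
        constructor <;> linarith
      have hWtg : ∀ s' ∈ Set.Icc s m, ((f₀ s', i) : X × (p ⁻¹' {f₀ s₀})) ∈ e.target := by
        intro s' hs'
        rw [e.mem_target]
        exact hfb s' (hJsub s' hs').1 (hJsub s' hs').2
      have hWp : ∀ s' ∈ Set.Icc s m, p (W s') = f₀ s' := by
        intro s' hs'
        exact e.proj_symm_apply (hWtg s' hs')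
      have hWcont : ContinuousOn W (Set.Icc s m) := by
        refine e.toOpenPartialHomeomorph.continuousOn_symm.comp
          (((hfcont.mono (fun s' hs' => hIccsub (hJsub s' hs').1)).prodMk continuousOn_const)) ?_
        intro s' hs'
        exact hWtg s' hs'
      have hveq : ∀ s' ∈ Set.Icc s m, dist z (W s') < R → dist z (W s') = s' := by
        intro s' hs' hlt
        have hs'Icc : s' ∈ Set.Icc (0:ℝ) L := hIccsub (hJsub s' hs').1
        have h1 : dist (p z) (p (W s')) = dist z (W s') :=
          hpiso z z (W s') (by simpa using hRpos) hlt
        rw [hWp s' hs'] at h1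
        have h2 : dist (p z) (f₀ s') = |0 - s'| := by
          conv_lhs => rw [← hf0]
          exact hfiso 0 ⟨le_refl 0, hL0⟩ s' hs'Icc
        rw [h2] at h1
        rw [← h1, zero_sub, abs_neg, abs_of_nonneg hs'Icc.1]
      have hgapJ : ∀ s' ∈ Set.Icc s m, dist z (W s') ∉ Set.Ioo ε R := by
        rintro s' hs' ⟨hgt, hltR⟩
        have h1 := hveq s' hs' hltR
        have h2 : s' ≤ s₁ := (hJsub s' hs').1.2
        have h3 : dist z (W s') < ε := by
          rw [h1]
          exact lt_of_le_of_lt (le_trans h2 hs₁.2) hLε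
        linarith
      have hWle : ∀ s' ∈ Set.Icc s m, dist z (W s') ≤ ε :=
        gap_principle' isPreconnected_Icc ((continuous_const.dist continuous_id).comp_continuousOn hWcont)
          (show ε < R by linarith) hgapJ (Set.left_mem_Icc.mpr hsm)
          (by show dist z (W s) ≤ ε; rw [hWs, hwd]; linarith [hss₁, hs₁.1, hs₁.2])
      have hJT : ∀ s' ∈ Set.Icc s m, s' ∈ T := by
        intro s' hs'
        have h1 : dist z (W s') ≤ ε := hWle s' hs'
        have h2 : dist z (W s') = s' := hveq s' hs' (by linarith)
        exact ⟨(hJsub s' hs').1, W s', h2, hWp s' hs'⟩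
      have hms₀ : m ≤ s₀ := le_csSup hTbdd (hJT m (Set.right_mem_Icc.mpr hsm))
      have hs₀s₁ : s₀ = s₁ := by
        by_contra hne
        have h1 : s₀ < s₁ := lt_of_le_of_ne hs₀1 hne
        have h2 : s₀ < m := lt_min h1 (by linarith)
        linarith
      have hs₁J : s₁ ∈ Set.Icc s m := by
        constructor
        · rw [← hs₀s₁]; exact hsle
        · rw [hm, hs₀s₁]
          exact le_min (le_refl s₁) (by linarith)
      obtain ⟨_, w', hw1, hw2⟩ := hJT s₁ hs₁J
      exact ⟨w', hw1, hw2⟩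
    choose wfun hw1 hw2 using hwit
    have htL : ∀ t : unitInterval, (t : ℝ) * L ∈ Set.Icc (0:ℝ) L := by
      intro t
      constructor
      · exact mul_nonneg t.2.1 hL0
      · calc (t : ℝ) * L ≤ 1 * L := mul_le_mul_of_nonneg_right t.2.2 hL0
        _ = L := one_mul L
    set g' : unitInterval → Xt := fun t => wfun ((t : ℝ) * L) (htL t) with hg'def
    have hdz : ∀ t, dist z (g' t) = (t : ℝ) * L := fun t => hw1 _ _
    have hpg : ∀ t, p (g' t) = f₀ ((t : ℝ) * L) := fun t => hw2 _ _
    have hzR' : ∀ t, dist z (g' t) < R := by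
      intro t
      rw [hdz]
      exact lt_of_le_of_lt (htL t).2 (by linarith)
    have hg'0 : g' 0 = z := by
      have h1 := hdz 0
      rw [show (((0 : unitInterval) : ℝ)) = 0 from rfl, zero_mul] at h1
      exact (dist_eq_zero.mp h1).symm
    have hg'1 : g' 1 = x := by
      have hp1 : p (g' 1) = p x := by
        rw [hpg, show (((1 : unitInterval) : ℝ)) = 1 from rfl, one_mul, hfL]
      obtain ⟨k, hk⟩ := hfib (g' 1) x hp1
      rcases eq_or_ne k 1 with rfl | hkne
      · rw [one_smul] at hk
        exact hk
      · exfalso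
        have h1 := hsep k (g' 1) hkne
        rw [hk] at h1
        have h2 : dist z (g' 1) ≤ L := by
          rw [hdz, show (((1 : unitInterval) : ℝ)) = 1 from rfl, one_mul]
        have h3 : dist (g' 1) x ≤ dist (g' 1) z + dist z x := dist_triangle _ _ _
        rw [dist_comm (g' 1) z] at h3
        have h4 : dist z x < ε := by rw [dist_comm]; exact hz
        linarith
    have hLip : ∀ t t' : unitInterval, dist (g' t) (g' t') = |(t : ℝ) * L - (t' : ℝ) * L| := by
      intro t t'
      rw [← hpiso z (g' t) (g' t') (hzR' t) (hzR' t'), hpg, hpg]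
      exact hfiso _ (htL t) _ (htL t')
    have hg'cont : Continuous g' := by
      rw [Metric.continuous_iff]
      intro t δ hδ
      refine ⟨δ / (L + 1), by positivity, fun a hab => ?_⟩
      rw [hLip a t, ← sub_mul, abs_mul, abs_of_nonneg hL0]
      have hd : |(a : ℝ) - (t : ℝ)| < δ / (L + 1) := by
        rwa [Subtype.dist_eq, Real.dist_eq] at hab
      calc |(a : ℝ) - (t : ℝ)| * L ≤ |(a : ℝ) - (t : ℝ)| * (L + 1) := by
            nlinarith [abs_nonneg ((a : ℝ) - (t : ℝ))]
      _ < (δ / (L + 1)) * (L + 1) := by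
            apply mul_lt_mul_of_pos_right hd
            linarith
      _ = δ := by field_simp
    have hg'ball : ∀ t, g' t ∈ Metric.ball x ε := by
      intro t
      rw [Metric.mem_ball]
      have h1 : dist (g' t) (g' 1) = |(t : ℝ) * L - ((1 : unitInterval) : ℝ) * L| := hLip t 1
      rw [hg'1, show (((1 : unitInterval) : ℝ)) = 1 from rfl, one_mul] at h1
      have h2 : |(t : ℝ) * L - L| = L - (t : ℝ) * L := by
        rw [abs_sub_comm]
        exact abs_of_nonneg (by linarith [(htL t).2])
      rw [h1, h2]
      linarith [(htL t).1]
    exact ⟨⟨⟨g', hg'cont⟩, hg'0, hg'1⟩, hg'ball⟩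
  -- Part 2 conclusion
  intro v
  have hbB : r v ∈ Bset := hrB v
  have hqbv : q (r v) = v.1 := hrq v
  have hbB' := (hBmem (r v)).mp hbB
  have hmemB2 : ∀ z : Xt, dist z x < ε → (((r v).1, z) : Ghat × Xt) ∈ Bset := by
    intro z hz'
    rw [hBmem]
    exact ⟨hbB'.1, hz'⟩
  have claim1 : ∀ (z : Xt) (hz : dist z x < ε),
      (⟨q ((r v).1, z), hballmem _ (hmemB2 z hz)⟩ :
        { u : MSol (Xt := Xt) act // msodist act (Quot.mk _ (γ, x)) u < ε }) ∈
        pathComponent v := by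
    intro z hz
    have hJ : JoinedIn (Metric.ball x ε) (r v).2 z := by
      have h1 := hlift (r v).2 (by rw [dist_comm]; exact hbB'.2)
      have h2 := hlift z (by rw [dist_comm]; exact hz)
      exact h1.trans h2.symm
    obtain ⟨P, hP⟩ := hJ
    have hPt : ∀ t, dist (P t) x < ε := by
      intro t
      have := hP t
      rwa [Metric.mem_ball] at this
    refine ⟨⟨⟨fun t => ⟨q ((r v).1, P t), hballmem _ (hmemB2 (P t) (hPt t))⟩, ?_⟩, ?_, ?_⟩⟩
    · exact Continuous.subtype_mk
        (continuous_quot_mk.comp (continuous_const.prodMk P.continuous)) _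
    · apply Subtype.ext
      show q ((r v).1, P 0) = v.1
      rw [P.source, Prod.mk.eta]
      exact hqbv
    · apply Subtype.ext
      show q ((r v).1, P 1) = q ((r v).1, z)
      rw [P.target]
  have claim2 : ∀ w, w ∈ pathComponent v → (r w).1 = (r v).1 := by
    intro w hw
    obtain ⟨Q⟩ := hw
    have hχ : Continuous fun t => (r (Q t)).1 :=
      continuous_fst.comp (hrcont.comp Q.continuous)
    have hcst := path_const' hgapG hχ 1
    simp only [Q.source, Q.target] at hcst
    exact hcst
  set F : ↥(Metric.ball x ε) → ↥(pathComponent v) := fun z =>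
    ⟨⟨q ((r v).1, z.1), hballmem _ (hmemB2 z.1 (Metric.mem_ball.mp z.2))⟩,
      claim1 z.1 (Metric.mem_ball.mp z.2)⟩ with hFdef
  have hFbij : Function.Bijective F := by
    constructor
    · intro z z' hzz
      have h1 : q ((r v).1, z.1) = q ((r v).1, z'.1) := congrArg (fun w => w.1.1) hzz
      have h2 := hinjB _ (hmemB2 z.1 (Metric.mem_ball.mp z.2)) _
        (hmemB2 z'.1 (Metric.mem_ball.mp z'.2)) h1
      exact Subtype.ext (congrArg Prod.snd h2)
    · rintro ⟨w, hw⟩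
      have h1 : (r w).1 = (r v).1 := claim2 w hw
      have h2 : (r w).2 ∈ Metric.ball x ε := by
        rw [Metric.mem_ball]
        exact ((hBmem (r w)).mp (hrB w)).2
      refine ⟨⟨(r w).2, h2⟩, ?_⟩
      apply Subtype.ext
      apply Subtype.ext
      show q ((r v).1, (r w).2) = w.1
      rw [← h1, Prod.mk.eta]
      exact hrq w
  set eqv'0 := (Equiv.ofBijective F hFbij).symm with heqv'0
  refine ⟨eqv'0, ?_⟩
  intro a b'
  have ha := (Equiv.ofBijective F hFbij).apply_symm_apply a
  have hb2 := (Equiv.ofBijective F hFbij).apply_symm_apply b'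
  have ha1 : a.1.1 = q ((r v).1, (eqv'0 a : Xt)) := (congrArg (fun w => w.1.1) ha).symm
  have hb1 : b'.1.1 = q ((r v).1, (eqv'0 b' : Xt)) := (congrArg (fun w => w.1.1) hb2).symm
  rw [ha1, hb1, hmain _ _ (hmemB2 _ (Metric.mem_ball.mp (eqv'0 a).2))
    (hmemB2 _ (Metric.mem_ball.mp (eqv'0 b').2)), Prod.dist_eq]
  show max (dist (r v).1 (r v).1) (dist ((eqv'0 a : Xt)) ((eqv'0 b' : Xt))) = _
  rw [dist_self]
  exact max_eq_right dist_nonneg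
end

section
/- Suppose (X,∗) is an unloopable compact geodesic metric space with residually finite, finitely generated fundamental group G = π₁(X,∗), and let (sol X, σ, ∗) be the quotient (Ĝ × X̃)/G with the quotient metric σ and basepoint ∗ = [(1,∗̃)]. If f, g : (sol X,∗) → (sol X,∗) are pointed continuous maps which are homotopic, then there exists a constant C such that d_X(f_X̃(p), g_X̃(p)) ≤ C for all p ∈ X̃. -/
open scoped Classical

section SolAuxA

set_option linter.unusedSectionVars false

variable {G Ghat Xt : Type*} [Group G] [MulAction G Xt] [MetricSpace Ghat] [MetricSpace Xt]
variable {act : G → Ghat → Ghat} {ι : G → Ghat}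

private lemma solAux_equiv (hact1 : ∀ γ : Ghat, act 1 γ = γ)
    (hactmul : ∀ (g h : G) (γ : Ghat), act g (act h γ) = act (g * h) γ) :
    Equivalence (solRel (Xt := Xt) act) := by
  refine ⟨fun a => ⟨1, hact1 _, one_smul _ _⟩, ?_, ?_⟩
  · rintro a b ⟨g, h1, h2⟩
    refine ⟨g⁻¹, ?_, ?_⟩
    · rw [← h1, hactmul, inv_mul_cancel, hact1]
    · rw [← h2, ← mul_smul, inv_mul_cancel, one_smul]
  · rintro a b c ⟨g, h1, h2⟩ ⟨k, k1, k2⟩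
    exact ⟨k * g, by rw [← k1, ← h1, hactmul], by rw [← k2, ← h2, mul_smul]⟩

private lemma solAux_quot_eq (hact1 : ∀ γ : Ghat, act 1 γ = γ)
    (hactmul : ∀ (g h : G) (γ : Ghat), act g (act h γ) = act (g * h) γ)
    {a b : Ghat × Xt} :
    (Quot.mk (solRel (Xt := Xt) act) a = Quot.mk (solRel act) b) ↔ solRel act a b := by
  rw [Quot.eq]
  exact (solAux_equiv hact1 hactmul).eqvGen_iff

private lemma solAux_open (hact1 : ∀ γ : Ghat, act 1 γ = γ)
    (hactmul : ∀ (g h : G) (γ : Ghat), act g (act h γ) = act (g * h) γ)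
    (hiso : ∀ g : G, Isometry fun x : Xt => g • x)
    (hactiso : ∀ g : G, Isometry (act g)) :
    IsOpenMap (Quot.mk (solRel (Xt := Xt) act)) := by
  intro O hO
  have key : Quot.mk (solRel (Xt := Xt) act) ⁻¹' (Quot.mk (solRel act) '' O)
      = ⋃ g : G, (fun u : Ghat × Xt => (act g u.1, g • u.2)) ⁻¹' O := by
    ext u
    simp only [Set.mem_preimage, Set.mem_image, Set.mem_iUnion]
    constructor
    · rintro ⟨o, hoO, ho⟩
      obtain ⟨g, h1, h2⟩ := (solAux_quot_eq hact1 hactmul).1 ho.symm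
      exact ⟨g, by simpa [h1, h2] using hoO⟩
    · rintro ⟨g, hg⟩
      exact ⟨_, hg, (Quot.sound ⟨g, rfl, rfl⟩).symm⟩
  rw [← isQuotientMap_quot_mk.isOpen_preimage, key]
  exact isOpen_iUnion fun g => hO.preimage
    (((hactiso g).continuous.comp continuous_fst).prodMk ((hiso g).continuous.comp continuous_snd))

private lemma solAux_distS (hι : ∀ g h : G, dist (ι g) (ι h) = dhat G g h)
    (hdense : DenseRange ι) (γ δ : Ghat) :
    dist γ δ ∈ insert (0:ℝ) (Set.range fun n : ℕ => Real.exp (-(n:ℝ))) := by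
  set S := insert (0:ℝ) (Set.range fun n : ℕ => Real.exp (-(n:ℝ))) with hSdef
  have htend : Filter.Tendsto (fun n : ℕ => Real.exp (-(n : ℝ))) Filter.atTop (nhds 0) :=
    Real.tendsto_exp_atBot.comp (Filter.tendsto_neg_atTop_atBot.comp tendsto_natCast_atTop_atTop)
  have hSclosed : IsClosed S := htend.isCompact_insert_range.isClosed
  have hmem : ∀ g h : G, dhat G g h ∈ S := by
    intro g h
    unfold dhat
    split
    · exact Set.mem_insert _ _
    · exact Set.mem_insert_of_mem _ ⟨_, rfl⟩
  have hcl : IsClosed {q : Ghat × Ghat | dist q.1 q.2 ∈ S} :=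
    IsClosed.preimage continuous_dist hSclosed
  have hsub : Set.range (Prod.map ι ι) ⊆ {q : Ghat × Ghat | dist q.1 q.2 ∈ S} := by
    rintro q ⟨⟨g, h⟩, rfl⟩
    simpa [Prod.map, hι] using hmem g h
  have hall : closure (Set.range (Prod.map ι ι)) ⊆ {q : Ghat × Ghat | dist q.1 q.2 ∈ S} :=
    hcl.closure_subset_iff.2 hsub
  rw [(hdense.prodMap hdense).closure_eq] at hall
  exact hall (Set.mem_univ (γ, δ))

private lemma solAux_const {T : Type*} [TopologicalSpace T]
    (hS : ∀ γ δ : Ghat, dist γ δ ∈ insert (0:ℝ) (Set.range fun n : ℕ => Real.exp (-(n:ℝ))))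
    {A : Set T} (hA : IsPreconnected A) {k : T → Ghat} (hk : ContinuousOn k A)
    {t₀ t₁ : T} (h₀ : t₀ ∈ A) (h₁ : t₁ ∈ A) : k t₀ = k t₁ := by
  by_contra hne
  have hd : 0 < dist (k t₁) (k t₀) := dist_pos.2 fun hEq => hne hEq.symm
  have hφ : ContinuousOn (fun t => dist (k t) (k t₀)) A := (continuous_id.dist continuous_const).comp_continuousOn hk
  have him : IsPreconnected ((fun t => dist (k t) (k t₀)) '' A) := hA.image _ hφ
  have hIcc : Set.Icc (0:ℝ) (dist (k t₁) (k t₀)) ⊆ (fun t => dist (k t) (k t₀)) '' A :=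
    him.ordConnected.out ⟨t₀, h₀, dist_self _⟩ ⟨t₁, h₁, rfl⟩
  have hc : (Set.Icc (0:ℝ) (dist (k t₁) (k t₀))).Countable := by
    refine Set.Countable.mono ?_ ((Set.countable_range fun n : ℕ => Real.exp (-(n:ℝ))).insert 0)
    intro r hr
    obtain ⟨t, _, rfl⟩ := hIcc hr
    exact hS _ _
  have hz := hc.measure_zero MeasureTheory.volume
  rw [Real.volume_Icc, sub_zero] at hz
  exact (ENNReal.ofReal_pos.2 hd).ne' hz

private lemma solAux_iota_inj (hι : ∀ g h : G, dist (ι g) (ι h) = dhat G g h)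
    (hRF : (⨅ (H : Subgroup G) (_ : H.FiniteIndex), H) = ⊥) :
    Function.Injective ι := by
  intro a b hab
  have hd : dhat G a b = 0 := by rw [← hι, hab, dist_self]
  have hcond : ∀ H : Subgroup G, H.FiniteIndex → a * b⁻¹ ∈ H := by
    by_contra hc
    unfold dhat at hd
    rw [if_neg hc] at hd
    exact Real.exp_ne_zero _ hd
  have hmem : a * b⁻¹ ∈ (⊥ : Subgroup G) := by
    rw [← hRF]
    exact Subgroup.mem_iInf.2 fun H => Subgroup.mem_iInf.2 fun hH => hcond H hH
  rwa [Subgroup.mem_bot, mul_inv_eq_one] at hmem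

private lemma solAux_mk_eq_mleaf (hactι : ∀ g h : G, act g (ι h) = ι (h * g⁻¹)) (h : G) (x : Xt) :
    Quot.mk (solRel (Xt := Xt) act) (ι h, x) = mleaf act ι (h • x) :=
  Quot.sound ⟨h, by rw [hactι]; simp, rfl⟩

private lemma solAux_extract (hact1 : ∀ γ : Ghat, act 1 γ = γ)
    (hactmul : ∀ (g h : G) (γ : Ghat), act g (act h γ) = act (g * h) γ)
    (hactι : ∀ g h : G, act g (ι h) = ι (h * g⁻¹)) {γ : Ghat} {x y : Xt}
    (h : Quot.mk (solRel (Xt := Xt) act) (γ, x) = mleaf act ι y) :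
    ∃ g : G, γ = ι g ∧ g • x = y := by
  simp only [mleaf] at h
  obtain ⟨g, h1, h2⟩ := (solAux_quot_eq hact1 hactmul).1 h
  refine ⟨g, ?_, h2⟩
  have hγ : act g⁻¹ (act g γ) = act g⁻¹ (ι 1) := by rw [h1]
  rw [hactmul, inv_mul_cancel, hact1, hactι] at hγ
  simpa using hγ

private lemma solAux_mleaf_inj (hact1 : ∀ γ : Ghat, act 1 γ = γ)
    (hactmul : ∀ (g h : G) (γ : Ghat), act g (act h γ) = act (g * h) γ)
    (hactι : ∀ g h : G, act g (ι h) = ι (h * g⁻¹)) (hιinj : Function.Injective ι) :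
    Function.Injective (mleaf (Xt := Xt) act ι) := by
  intro a b hab
  simp only [mleaf] at hab
  obtain ⟨g, h1, h2⟩ := (solAux_quot_eq hact1 hactmul).1 hab
  rw [hactι] at h1
  have hg : g = 1 := by
    have := hιinj h1
    simpa [inv_eq_one] using this
  rw [hg, one_smul] at h2
  exact h2

end SolAuxA

section SolAuxB

set_option linter.unusedSectionVars false

variable {G Ghat Xt : Type*} [Group G] [MulAction G Xt] [MetricSpace Ghat] [MetricSpace Xt]
variable {act : G → Ghat → Ghat} {ι : G → Ghat}

private lemma solAux_chart {T : Type*} [TopologicalSpace T]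
    (hact1 : ∀ γ : Ghat, act 1 γ = γ)
    (hactmul : ∀ (g h : G) (γ : Ghat), act g (act h γ) = act (g * h) γ)
    (hopen : IsOpenMap (Quot.mk (solRel (Xt := Xt) act)))
    (hS : ∀ γ δ : Ghat, dist γ δ ∈ insert (0:ℝ) (Set.range fun n : ℕ => Real.exp (-(n:ℝ))))
    (γ₀ : Ghat) (x₀ : Xt) {ε ρ : ℝ}
    (hP : ∀ (g : G) (y z : Xt), y ∈ Metric.ball x₀ ε → z ∈ Metric.ball x₀ ε → g • y = z → g = 1)
    {A : Set T} (hA : IsPreconnected A) {k : T → MSol (Xt := Xt) act}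
    (hk : ContinuousOn k A)
    (hkW : ∀ t ∈ A, k t ∈ Quot.mk (solRel act) '' (Metric.ball γ₀ ρ ×ˢ Metric.ball x₀ ε)) :
    ∃ c : Ghat, ∀ t ∈ A, ∃ x ∈ Metric.ball x₀ ε, k t = Quot.mk (solRel act) (c, x) := by
  classical
  set O := Metric.ball γ₀ ρ ×ˢ Metric.ball x₀ ε with hOdef
  set W := Quot.mk (solRel (Xt := Xt) act) '' O with hWdef
  have hOopen : IsOpen O := Metric.isOpen_ball.prod Metric.isOpen_ball
  have hinj : ∀ a ∈ O, ∀ b ∈ O,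
      Quot.mk (solRel (Xt := Xt) act) a = Quot.mk (solRel act) b → a = b := by
    intro a ha b hb hab
    obtain ⟨g, h1, h2⟩ := (solAux_quot_eq hact1 hactmul).1 hab
    have hg : g = 1 := hP g a.2 b.2 ha.2 hb.2 h2
    rw [hg, hact1] at h1
    rw [hg, one_smul] at h2
    exact Prod.ext h1 h2
  rcases A.eq_empty_or_nonempty with hAe | ⟨t₀, ht₀⟩
  · exact ⟨γ₀, by simp [hAe]⟩
  have hmem : ∀ u : MSol (Xt := Xt) act, u ∈ W → ∃ o, o ∈ O ∧ Quot.mk (solRel act) o = u :=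
    fun u hu => hu
  haveI : Nonempty (Ghat × Xt) := ⟨(γ₀, x₀)⟩
  choose! ro hroO hroQ using hmem
  have hrc : ContinuousOn ro W := by
    intro u hu
    refine Filter.tendsto_def.mpr fun N hN => mem_nhdsWithin.mpr ?_
    refine ⟨Quot.mk (solRel act) '' (interior N ∩ O),
      hopen _ (isOpen_interior.inter hOopen),
      ⟨ro u, ⟨mem_interior_iff_mem_nhds.2 hN, hroO u hu⟩, hroQ u hu⟩, ?_⟩
    rintro v ⟨⟨o, ⟨hoN, hoO⟩, hov⟩, hvW⟩
    have hro : ro v = o := hinj _ (hroO v hvW) _ hoO (by rw [hroQ v hvW, ← hov])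
    exact Set.mem_preimage.2 (hro ▸ interior_subset hoN)
  have hkc : ContinuousOn (fun t => (ro (k t)).1) A :=
    (continuous_fst.comp_continuousOn hrc).comp hk fun t ht => hkW t ht
  refine ⟨(ro (k t₀)).1, fun t ht => ?_⟩
  have hconst : (ro (k t)).1 = (ro (k t₀)).1 := solAux_const hS hA hkc ht ht₀
  refine ⟨(ro (k t)).2, (hroO _ (hkW t ht)).2, ?_⟩
  exact (hroQ _ (hkW t ht)).symm.trans (congrArg _ (Prod.ext hconst rfl))

private lemma solAux_L
    (hact1 : ∀ γ : Ghat, act 1 γ = γ)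
    (hactmul : ∀ (g h : G) (γ : Ghat), act g (act h γ) = act (g * h) γ)
    (hactι : ∀ g h : G, act g (ι h) = ι (h * g⁻¹))
    (hopen : IsOpenMap (Quot.mk (solRel (Xt := Xt) act)))
    (hS : ∀ γ δ : Ghat, dist γ δ ∈ insert (0:ℝ) (Set.range fun n : ℕ => Real.exp (-(n:ℝ))))
    (hloc' : ∀ x₀ : Xt, ∃ ε > 0, ∀ (g : G) (y z : Xt),
      y ∈ Metric.ball x₀ ε → z ∈ Metric.ball x₀ ε → g • y = z → g = 1)
    (k : ℝ → MSol (Xt := Xt) act) (hk : Continuous k)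
    (h0 : k 0 ∈ Set.range (mleaf act ι)) : ∀ t, k t ∈ Set.range (mleaf act ι) := by
  set E := {t : ℝ | k t ∈ Set.range (mleaf act ι)} with hE
  have hstar : ∀ t₀ : ℝ, ∃ r > 0,
      ((∃ t₁ ∈ Metric.ball t₀ r, t₁ ∈ E) → ∀ t ∈ Metric.ball t₀ r, t ∈ E) := by
    intro t₀
    obtain ⟨a, ha⟩ := Quot.exists_rep (k t₀)
    obtain ⟨ε, hε, hP⟩ := hloc' a.2
    set W := Quot.mk (solRel (Xt := Xt) act) '' (Metric.ball a.1 1 ×ˢ Metric.ball a.2 ε) with hWdef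
    have hWopen : IsOpen W := hopen _ (Metric.isOpen_ball.prod Metric.isOpen_ball)
    have hmemW : k t₀ ∈ W :=
      ⟨a, ⟨Metric.mem_ball_self one_pos, Metric.mem_ball_self hε⟩, ha⟩
    obtain ⟨r, hr, hball⟩ := Metric.mem_nhds_iff.1 ((hWopen.preimage hk).mem_nhds hmemW)
    refine ⟨r, hr, ?_⟩
    have hAconn : IsPreconnected (Metric.ball t₀ r) := by
      rw [Real.ball_eq_Ioo]; exact isPreconnected_Ioo
    obtain ⟨c, hc⟩ := solAux_chart hact1 hactmul hopen hS a.1 a.2 hP hAconn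
      hk.continuousOn fun t ht => hball ht
    rintro ⟨t₁, ht₁, y, hy⟩ t ht
    obtain ⟨x₁, hx₁, hkt₁⟩ := hc t₁ ht₁
    obtain ⟨g, hg1, hg2⟩ := solAux_extract hact1 hactmul hactι (γ := c) (x := x₁) (y := y)
      (by rw [← hkt₁, hy])
    obtain ⟨x, hx, hkt⟩ := hc t ht
    refine ⟨g • x, ?_⟩
    rw [← solAux_mk_eq_mleaf hactι, hkt, hg1]
  have hopenE : IsOpen E := by
    rw [isOpen_iff_mem_nhds]
    intro t₀ ht₀
    obtain ⟨r, hr, himp⟩ := hstar t₀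
    exact Filter.mem_of_superset (Metric.ball_mem_nhds t₀ hr)
      fun t ht => himp ⟨t₀, Metric.mem_ball_self hr, ht₀⟩ t ht
  have hopenEc : IsOpen Eᶜ := by
    rw [isOpen_iff_mem_nhds]
    intro t₀ ht₀
    obtain ⟨r, hr, himp⟩ := hstar t₀
    refine Filter.mem_of_superset (Metric.ball_mem_nhds t₀ hr) fun t ht htE => ht₀ ?_
    exact himp ⟨t, ht, htE⟩ t₀ (Metric.mem_ball_self hr)
  have hEuniv : E = Set.univ :=
    IsClopen.eq_univ ⟨isOpen_compl_iff.1 hopenEc, hopenE⟩ ⟨0, h0⟩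
  intro t
  have ht : t ∈ E := by rw [hEuniv]; trivial
  exact ht

end SolAuxB

section SolAuxC

set_option linter.unusedSectionVars false

variable {G : Type*} [Group G]

private lemma solAux_psurj {X' Xt' : Type*} [TopologicalSpace X'] [PreconnectedSpace X']
    [TopologicalSpace Xt'] [Nonempty Xt'] {p : Xt' → X'} (hcov : IsCoveringMap p) :
    Function.Surjective p := by
  have hopen : IsOpen (Set.range p) := hcov.isOpenMap.isOpen_range
  have hclosed : IsClosed (Set.range p) := by
    rw [← isOpen_compl_iff, isOpen_iff_mem_nhds]
    intro x hx
    obtain ⟨hdisc, U, hxU, hU, hfU, H, hH⟩ := hcov x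
    refine Filter.mem_of_superset (hU.mem_nhds hxU) ?_
    rintro u hu ⟨y, rfl⟩
    exact hx ⟨(H ⟨y, hu⟩).2.1, (H ⟨y, hu⟩).2.2⟩
  have huniv : Set.range p = Set.univ :=
    IsClopen.eq_univ ⟨hclosed, hopen⟩ (Set.range_nonempty p)
  exact Set.range_eq_univ.1 huniv

private lemma solAux_K {X' Xt' : Type*} [MetricSpace X'] [MetricSpace Xt'] [CompactSpace X']
    [Nonempty Xt'] [PathConnectedSpace X'] [MulAction G Xt'] {p : Xt' → X'}
    (hcov : IsCoveringMap p)
    (hfib : ∀ x y : Xt', p x = p y → ∃ g : G, g • x = y) :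
    ∃ K : Set Xt', IsCompact K ∧ ∀ y : Xt', ∃ g : G, g • y ∈ K := by
  classical
  have hsurj : Function.Surjective p := solAux_psurj hcov
  have hsec : ∀ x : X', ∃ (U K₀ : Set X') (s : X' → Xt'),
      IsCompact K₀ ∧ x ∈ interior K₀ ∧ K₀ ⊆ U ∧ ContinuousOn s U ∧ ∀ u ∈ U, p (s u) = u := by
    intro x
    obtain ⟨xt, hxt⟩ := hsurj x
    haveI : Nonempty (p ⁻¹' {x}) := ⟨⟨xt, hxt⟩⟩
    let T := (hcov x).toTrivialization
    have hT := (hcov x).mem_toTrivialization_baseSet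
    obtain ⟨K₀, hK₀c, hK₀i, hK₀s⟩ := exists_compact_subset T.open_baseSet hT
    refine ⟨T.baseSet, K₀, fun u => T.toOpenPartialHomeomorph.symm (u, ⟨xt, hxt⟩),
      hK₀c, hK₀i, hK₀s, ?_, ?_⟩
    · exact T.toOpenPartialHomeomorph.continuousOn_symm.comp
        ((continuous_id.prodMk continuous_const).continuousOn)
        fun u hu => T.mem_target.2 hu
    · exact fun u hu => T.proj_symm_apply' hu
  choose U K₀ s hKc hKi hKU hsc hsp using hsec
  obtain ⟨F, hF⟩ := isCompact_univ.elim_finite_subcover (fun x => interior (K₀ x))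
    (fun x => isOpen_interior) (fun x _ => Set.mem_iUnion.2 ⟨x, hKi x⟩)
  refine ⟨⋃ x ∈ F, s x '' K₀ x, ?_, ?_⟩
  · exact F.finite_toSet.isCompact_biUnion
      fun x _ => (hKc x).image_of_continuousOn ((hsc x).mono (hKU x))
  · intro y
    have hy : p y ∈ ⋃ x ∈ F, interior (K₀ x) := hF (Set.mem_univ _)
    obtain ⟨x, hxF, hyx⟩ := Set.mem_iUnion₂.1 hy
    have h1 : p y ∈ K₀ x := interior_subset hyx
    have h2 : p (s x (p y)) = p y := hsp x _ (hKU x h1)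
    obtain ⟨g, hg⟩ := hfib y (s x (p y)) h2.symm
    exact ⟨g, Set.mem_biUnion hxF (hg ▸ ⟨p y, h1, rfl⟩)⟩

private lemma solAux_unif {Y : Type*} [TopologicalSpace Y] [CompactSpace Y] [T2Space Y]
    {J : Type*} {W : J → Set Y} (hW : ∀ j, IsOpen (W j)) (hcov : ∀ y : Y, ∃ j, y ∈ W j)
    (F : C(unitInterval × Y, Y)) :
    ∃ δ : ℝ, 0 < δ ∧ ∀ (t : unitInterval) (u : Y), ∃ j, ∀ t' : unitInterval,
      dist t t' ≤ δ → F (t', u) ∈ W j := by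
  letI : UniformSpace Y := uniformSpaceOfCompactR1
  obtain ⟨V, hV, hVW⟩ := lebesgue_number_lemma isCompact_univ hW
    fun y _ => Set.mem_iUnion.2 (hcov y)
  have hUC : UniformContinuous (fun q : unitInterval × Y => F q) :=
    CompactSpace.uniformContinuous_of_continuous F.continuous
  have hpre : (fun q : (unitInterval × Y) × (unitInterval × Y) => (F q.1, F q.2)) ⁻¹' V
      ∈ (uniformity (unitInterval × Y)) := hUC hV
  rw [uniformity_prod] at hpre
  obtain ⟨s, hs, t, ht, hst⟩ := Filter.mem_inf_iff.1 hpre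
  obtain ⟨s', hs', hs'sub⟩ := Filter.mem_comap.1 hs
  obtain ⟨t', ht', ht'sub⟩ := Filter.mem_comap.1 ht
  obtain ⟨δ, hδpos, hδ⟩ := Metric.mem_uniformity_dist.1 hs'
  refine ⟨δ / 2, by positivity, fun t₀ u => ?_⟩
  obtain ⟨j, hj⟩ := hVW (F (t₀, u)) (Set.mem_univ _)
  refine ⟨j, fun t'' hdist => hj ?_⟩
  have hpair : (((t₀, u), (t'', u)) : (unitInterval × Y) × (unitInterval × Y))
      ∈ (fun q : (unitInterval × Y) × (unitInterval × Y) => (F q.1, F q.2)) ⁻¹' V := by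
    rw [hst]
    constructor
    · exact hs'sub (hδ (lt_of_le_of_lt hdist (by linarith)))
    · exact ht'sub (refl_mem_uniformity ht')
  exact hpair

end SolAuxC

set_option maxHeartbeats 1000000

/-- **Statement 9.** Homotopic pointed continuous self-maps of the solenoid
`(sol X, σ, ∗)` have baseleaf restrictions at uniformly bounded distance. -/
theorem leafRestrict_bounded_distance_of_homotopic
    (X Xt G Ghat : Type*) [MetricSpace X] [MetricSpace Xt] [MetricSpace Ghat]
    [CompactSpace X] [CompactSpace Ghat] [CompleteSpace Ghat] [Nonempty Xt]
    [PathConnectedSpace X] [LocallyPathConnectedSpace X]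
    [SimplyConnectedSpace Xt] [LocallyPathConnectedSpace Xt]
    [Group G] [Group.FG G] [MulAction G Xt]
    (hgeo : IsGeodesicMetricSpace X)
    (p : Xt → X) (hcov : IsCoveringMap p)
    (hloc : ∀ xt : Xt, ∃ ε > 0, ∀ y ∈ Metric.ball xt ε, ∀ z ∈ Metric.ball xt ε,
      dist (p y) (p z) = dist y z)
    (hiso : ∀ g : G, Isometry fun x : Xt => g • x)
    (hdeck : ∀ (g : G) (x : Xt), p (g • x) = p x)
    (hfib : ∀ x y : Xt, p x = p y → ∃ g : G, g • x = y)
    (hfree : ∀ (g : G) (x : Xt), g • x = x → g = 1)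
    (x₀ : X) (xt₀ : Xt) (hx₀ : p xt₀ = x₀) (e : G ≃* FundamentalGroup X x₀)
    (hRF : (⨅ (H : Subgroup G) (_ : H.FiniteIndex), H) = ⊥)
    (ι : G → Ghat) (hι : ∀ g h : G, dist (ι g) (ι h) = dhat G g h)
    (hdense : DenseRange ι)
    (act : G → Ghat → Ghat)
    (hact1 : ∀ γ : Ghat, act 1 γ = γ)
    (hactmul : ∀ (g h : G) (γ : Ghat), act g (act h γ) = act (g * h) γ)
    (hactiso : ∀ g : G, Isometry (act g))
    (hactι : ∀ g h : G, act g (ι h) = ι (h * g⁻¹))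
    (f g : C(MSol (Xt := Xt) act, MSol (Xt := Xt) act))
    (hf : f (mpt act ι xt₀) = mpt act ι xt₀)
    (hg : g (mpt act ι xt₀) = mpt act ι xt₀)
    (h : ContinuousMap.Homotopic f g) :
    ∃ C : ℝ, ∀ q : Xt,
      dist (leafRestrict act ι f q) (leafRestrict act ι g q) ≤ C := by
  classical
  obtain ⟨F⟩ := h
  -- basic facts
  have hqe : ∀ {a b : Ghat × Xt},
      (Quot.mk (solRel (Xt := Xt) act) a = Quot.mk (solRel act) b) ↔ solRel act a b :=
    fun {a b} => solAux_quot_eq hact1 hactmul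
  have hopenQ : IsOpenMap (Quot.mk (solRel (Xt := Xt) act)) :=
    solAux_open hact1 hactmul hiso hactiso
  have hS := solAux_distS hι hdense
  have hιinj : Function.Injective ι := solAux_iota_inj hι hRF
  have hminj : Function.Injective (mleaf (Xt := Xt) act ι) :=
    solAux_mleaf_inj hact1 hactmul hactι hιinj
  -- local rigidity radii
  have heps : ∀ xc : Xt, ∃ ε > 0, ∀ (g' : G) (y z : Xt),
      y ∈ Metric.ball xc ε → z ∈ Metric.ball xc ε → g' • y = z → g' = 1 := by
    intro xc
    obtain ⟨ε, hε, hl⟩ := hloc xc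
    refine ⟨ε, hε, fun g' y z hy hz hgy => ?_⟩
    have hdyz : dist (p y) (p z) = dist y z := hl y hy z hz
    have hz' : p z = p y := by rw [← hgy, hdeck]
    rw [hz', dist_self] at hdyz
    have hyz : y = z := dist_eq_zero.1 hdyz.symm
    exact hfree g' y (hgy.trans hyz.symm)
  choose ε hεpos hP using heps
  -- continuity of the baseleaf map
  have hml_cont : Continuous (mleaf (Xt := Xt) act ι) := by
    show Continuous fun x : Xt => Quot.mk (solRel act) (ι 1, x)
    exact continuous_quot_mk.comp (continuous_const.prodMk continuous_id)
  -- Lemma L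
  have hL : ∀ (k : ℝ → MSol (Xt := Xt) act), Continuous k →
      k 0 ∈ Set.range (mleaf act ι) → ∀ t, k t ∈ Set.range (mleaf act ι) :=
    fun k hk h0 => solAux_L hact1 hactmul hactι hopenQ hS
      (fun xc => ⟨ε xc, hεpos xc, hP xc⟩) k hk h0
  -- projIcc facts
  have h0proj : Set.projIcc (0:ℝ) 1 zero_le_one 0 = (0 : unitInterval) := by
    apply Subtype.ext; simp [Set.projIcc]
  have h1proj : Set.projIcc (0:ℝ) 1 zero_le_one 1 = (1 : unitInterval) := by
    apply Subtype.ext; simp [Set.projIcc]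
  -- the baseleaf is invariant under pointed continuous self-maps
  have hbase : ∀ (f' : C(MSol (Xt := Xt) act, MSol (Xt := Xt) act)),
      f' (mpt act ι xt₀) = mpt act ι xt₀ →
      ∀ q : Xt, f' (mleaf act ι q) ∈ Set.range (mleaf act ι) := by
    intro f' hf' q
    let γp : Path xt₀ q := PathConnectedSpace.somePath xt₀ q
    have hk'c : Continuous fun s : ℝ =>
        f' (mleaf act ι (γp (Set.projIcc 0 1 zero_le_one s))) :=
      f'.continuous.comp (hml_cont.comp (γp.continuous.comp continuous_projIcc))
    have hk'0 : f' (mleaf act ι (γp (Set.projIcc 0 1 zero_le_one 0)))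
        ∈ Set.range (mleaf act ι) := by
      rw [h0proj, γp.source]
      rw [show mleaf (Xt := Xt) act ι xt₀ = mpt act ι xt₀ from rfl, hf']
      exact ⟨xt₀, rfl⟩
    have hres := hL _ hk'c hk'0 1
    rw [h1proj, γp.target] at hres
    exact hres
  -- the projection to X
  have hπrespects : ∀ a b : Ghat × Xt, solRel act a b → p a.2 = p b.2 := by
    rintro a b ⟨g', h1, h2⟩
    rw [← h2, hdeck]
  have hπcont : Continuous (Quot.lift (fun u : Ghat × Xt => p u.2) hπrespects) :=
    continuous_quot_lift _ (hcov.continuous.comp continuous_snd)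
  -- Hausdorff
  haveI hT2 : T2Space (MSol (Xt := Xt) act) := by
    refine ⟨fun u v huv => ?_⟩
    obtain ⟨a, rfl⟩ := Quot.exists_rep u
    obtain ⟨b, rfl⟩ := Quot.exists_rep v
    by_cases hpab : p a.2 = p b.2
    · obtain ⟨g', hg'⟩ := hfib a.2 b.2 hpab
      have hbv : Quot.mk (solRel (Xt := Xt) act) b
          = Quot.mk (solRel act) (act g'⁻¹ b.1, a.2) :=
        Quot.sound ⟨g'⁻¹, rfl, by rw [← hg', inv_smul_smul]⟩
      have hne : a.1 ≠ act g'⁻¹ b.1 := by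
        intro hEq
        apply huv
        rw [hbv, ← hEq]
      have hρ : 0 < dist a.1 (act g'⁻¹ b.1) / 2 := half_pos (dist_pos.2 hne)
      refine ⟨Quot.mk (solRel act) ''
          (Metric.ball a.1 (dist a.1 (act g'⁻¹ b.1) / 2) ×ˢ Metric.ball a.2 (ε a.2)),
        Quot.mk (solRel act) ''
          (Metric.ball (act g'⁻¹ b.1) (dist a.1 (act g'⁻¹ b.1) / 2) ×ˢ Metric.ball a.2 (ε a.2)),
        hopenQ _ (Metric.isOpen_ball.prod Metric.isOpen_ball),
        hopenQ _ (Metric.isOpen_ball.prod Metric.isOpen_ball),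
        ⟨a, ⟨Metric.mem_ball_self hρ, Metric.mem_ball_self (hεpos a.2)⟩, rfl⟩,
        ?_, ?_⟩
      · rw [hbv]
        exact ⟨(act g'⁻¹ b.1, a.2),
          ⟨Metric.mem_ball_self hρ, Metric.mem_ball_self (hεpos a.2)⟩, rfl⟩
      · rw [Set.disjoint_left]
        rintro w ⟨o₁, ho₁, hw₁⟩ ⟨o₂, ho₂, hw₂⟩
        obtain ⟨g'', hg1, hg2⟩ := hqe.1 (hw₁.trans hw₂.symm)
        have hgone : g'' = 1 := hP a.2 g'' o₁.2 o₂.2 ho₁.2 ho₂.2 hg2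
        rw [hgone, hact1] at hg1
        have hd1 : dist o₁.1 a.1 < dist a.1 (act g'⁻¹ b.1) / 2 := ho₁.1
        have hd2 : dist o₂.1 (act g'⁻¹ b.1) < dist a.1 (act g'⁻¹ b.1) / 2 := ho₂.1
        rw [hg1] at hd1
        have htri : dist a.1 (act g'⁻¹ b.1) ≤ dist a.1 o₂.1 + dist o₂.1 (act g'⁻¹ b.1) :=
          dist_triangle _ _ _
        rw [dist_comm a.1 o₂.1] at htri
        linarith
    · obtain ⟨A, B, hA, hB, hxA, hyB, hAB⟩ := t2_separation hpab
      exact ⟨Quot.lift (fun u : Ghat × Xt => p u.2) hπrespects ⁻¹' A,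
        Quot.lift (fun u : Ghat × Xt => p u.2) hπrespects ⁻¹' B,
        hA.preimage hπcont, hB.preimage hπcont, hxA, hyB, hAB.preimage _⟩
  -- compactness
  haveI hCpt : CompactSpace (MSol (Xt := Xt) act) := by
    obtain ⟨K, hKc, hKmeet⟩ := solAux_K (G := G) hcov hfib
    refine ⟨?_⟩
    have hsub : (Set.univ : Set (MSol (Xt := Xt) act))
        ⊆ Quot.mk (solRel (Xt := Xt) act) '' (Set.univ ×ˢ K) := by
      rintro u -
      obtain ⟨a, rfl⟩ := Quot.exists_rep u
      obtain ⟨g', hg'⟩ := hKmeet a.2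
      exact ⟨(act g' a.1, g' • a.2), ⟨Set.mem_univ _, hg'⟩, (Quot.sound ⟨g', rfl, rfl⟩).symm⟩
    have himg : IsCompact (Quot.mk (solRel (Xt := Xt) act) '' (Set.univ ×ˢ K)) :=
      (isCompact_univ.prod hKc).image continuous_quot_mk
    rw [← Set.univ_subset_iff.1 hsub]
    exact himg
  haveI hT2' : T2Space (Quot (solRel (Xt := Xt) act)) := hT2
  haveI hCpt' : CompactSpace (Quot (solRel (Xt := Xt) act)) := hCpt
  -- finite chart cover
  have hrepall := fun u : MSol (Xt := Xt) act => Quot.exists_rep u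
  choose rep hrepQ using hrepall
  have hWo : ∀ u : MSol (Xt := Xt) act, IsOpen (Quot.mk (solRel act) ''
      (Metric.ball (rep u).1 1 ×ˢ Metric.ball (rep u).2 (ε (rep u).2))) :=
    fun u => hopenQ _ (Metric.isOpen_ball.prod Metric.isOpen_ball)
  have hWmem : ∀ u : MSol (Xt := Xt) act, u ∈ Quot.mk (solRel act) ''
      (Metric.ball (rep u).1 1 ×ˢ Metric.ball (rep u).2 (ε (rep u).2)) :=
    fun u => ⟨rep u, ⟨Metric.mem_ball_self one_pos, Metric.mem_ball_self (hεpos _)⟩, hrepQ u⟩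
  obtain ⟨tF, htF⟩ := isCompact_univ.elim_finite_subcover
    (fun u : MSol (Xt := Xt) act => Quot.mk (solRel act) ''
      (Metric.ball (rep u).1 1 ×ˢ Metric.ball (rep u).2 (ε (rep u).2)))
    hWo (fun u _ => Set.mem_iUnion.2 ⟨u, hWmem u⟩)
  have htFne : tF.Nonempty := by
    rcases Finset.eq_empty_or_nonempty tF with hE | hne
    · exfalso
      have := htF (Set.mem_univ (mpt act ι xt₀))
      simp [hE] at this
      exact this
    · exact hne
  set B := tF.sup' htFne (fun u => 2 * ε (rep u).2) with hB
  -- uniform continuity of the homotopy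
  obtain ⟨δ, hδ, hδ'⟩ := solAux_unif (J := {u // u ∈ tF})
    (W := fun j => Quot.mk (solRel act) ''
      (Metric.ball (rep j.1).1 1 ×ˢ Metric.ball (rep j.1).2 (ε (rep j.1).2)))
    (fun j => hWo j.1)
    (fun y => by
      obtain ⟨j, hj, hy⟩ := Set.mem_iUnion₂.1 (htF (Set.mem_univ y))
      exact ⟨⟨j, hj⟩, hy⟩)
    F.toContinuousMap
  obtain ⟨N, hN⟩ := exists_nat_gt (1 / δ)
  have hNpos : 0 < (N : ℝ) := lt_trans (by positivity) hN
  have h1N : 1 / (N : ℝ) < δ := by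
    rw [div_lt_iff₀ hNpos, mul_comm]
    rw [div_lt_iff₀ hδ] at hN
    exact hN
  refine ⟨(N : ℝ) * B, ?_⟩
  intro q
  -- the track path of q under the homotopy
  set k : ℝ → MSol (Xt := Xt) act :=
    fun s => F (Set.projIcc 0 1 zero_le_one s, mleaf act ι q) with hkdef
  have hkc : Continuous k :=
    F.continuous.comp (continuous_projIcc.prodMk continuous_const)
  have hk0 : k 0 ∈ Set.range (mleaf act ι) := by
    show F (Set.projIcc 0 1 zero_le_one 0, mleaf act ι q) ∈ _
    rw [h0proj, F.apply_zero]
    exact hbase f hf q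
  have hall : ∀ s, k s ∈ Set.range (mleaf act ι) := hL k hkc hk0
  choose Y hY using hall
  have hY0 : mleaf act ι (Y 0) = f (mleaf act ι q) := by
    rw [hY 0]
    show F (Set.projIcc 0 1 zero_le_one 0, mleaf act ι q) = _
    rw [h0proj, F.apply_zero]
  have hY1 : mleaf act ι (Y 1) = g (mleaf act ι q) := by
    rw [hY 1]
    show F (Set.projIcc 0 1 zero_le_one 1, mleaf act ι q) = _
    rw [h1proj, F.apply_one]
  -- per-step bound
  have hstep : ∀ i : ℕ, i < N →
      dist (Y ((i : ℝ) / N)) (Y (((i : ℝ) + 1) / N)) ≤ B := by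
    intro i hi
    obtain ⟨j, hj⟩ := hδ' (Set.projIcc 0 1 zero_le_one ((i : ℝ) / N)) (mleaf act ι q)
    have hAsub : ∀ s ∈ Set.Icc ((i : ℝ) / N) (((i : ℝ) + 1) / N),
        k s ∈ Quot.mk (solRel act) ''
          (Metric.ball (rep j.1).1 1 ×ˢ Metric.ball (rep j.1).2 (ε (rep j.1).2)) := by
      intro s hs
      have hsN : s - (i : ℝ) / N ≤ 1 / N := by
        have hsum : (i : ℝ) / N + 1 / N = ((i : ℝ) + 1) / N := by ring
        have := hs.2
        linarith
      have hdists : dist ((i : ℝ) / N) s ≤ 1 / N := by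
        rw [Real.dist_eq, abs_le]
        constructor
        · have h1Npos : (0:ℝ) ≤ 1 / N := by positivity
          have := hs.1
          linarith
        · linarith [hs.1]
      have hdd : dist (Set.projIcc (0:ℝ) 1 zero_le_one ((i : ℝ) / N))
          (Set.projIcc (0:ℝ) 1 zero_le_one s) ≤ δ := by
        have hlip := (LipschitzWith.projIcc (a := (0:ℝ)) (b := 1) zero_le_one).dist_le_mul
          ((i : ℝ) / N) s
        simp only [NNReal.coe_one, one_mul] at hlip
        exact le_trans hlip (le_trans hdists (le_of_lt h1N))
      exact hj (Set.projIcc 0 1 zero_le_one s) hdd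
    obtain ⟨c, hc⟩ := solAux_chart hact1 hactmul hopenQ hS (rep j.1).1 (rep j.1).2
      (hP (rep j.1).2) isPreconnected_Icc hkc.continuousOn hAsub
    have hiN : (i : ℝ) / N ≤ ((i : ℝ) + 1) / N :=
      (div_le_div_iff_of_pos_right hNpos).2 (by linarith)
    have hlend : (i : ℝ) / N ∈ Set.Icc ((i : ℝ) / N) (((i : ℝ) + 1) / N) := ⟨le_refl _, hiN⟩
    have hrend : ((i : ℝ) + 1) / N ∈ Set.Icc ((i : ℝ) / N) (((i : ℝ) + 1) / N) := ⟨hiN, le_refl _⟩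
    obtain ⟨x₁, hx₁, hk₁⟩ := hc _ hlend
    obtain ⟨x₂, hx₂, hk₂⟩ := hc _ hrend
    obtain ⟨h₁, hh₁, hs₁⟩ := solAux_extract hact1 hactmul hactι (by rw [← hk₁, hY])
    obtain ⟨h₂, hh₂, hs₂⟩ := solAux_extract hact1 hactmul hactι (by rw [← hk₂, hY])
    have hh12 : h₁ = h₂ := hιinj (hh₁.symm.trans hh₂)
    rw [← hs₁, ← hs₂, ← hh12]
    have hdeq : dist (h₁ • x₁) (h₁ • x₂) = dist x₁ x₂ := (hiso h₁).dist_eq x₁ x₂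
    rw [hdeq]
    have hb1 : dist x₁ (rep j.1).2 < ε (rep j.1).2 := Metric.mem_ball.1 hx₁
    have hb2 : dist x₂ (rep j.1).2 < ε (rep j.1).2 := Metric.mem_ball.1 hx₂
    have htri : dist x₁ x₂ ≤ dist x₁ (rep j.1).2 + dist (rep j.1).2 x₂ := dist_triangle _ _ _
    rw [dist_comm (rep j.1).2 x₂] at htri
    have hle : dist x₁ x₂ ≤ 2 * ε (rep j.1).2 := by linarith
    exact le_trans hle (Finset.le_sup' (fun u => 2 * ε (rep u).2) j.2)
  -- telescoping
  have hNne : (N : ℝ) ≠ 0 := ne_of_gt hNpos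
  have hmain := dist_le_range_sum_dist (fun i : ℕ => Y ((i : ℝ) / N)) N
  simp only [Nat.cast_zero, zero_div, div_self hNne] at hmain
  have hsumle : ∑ i ∈ Finset.range N, dist (Y ((i : ℝ) / N)) (Y (((i + 1 : ℕ) : ℝ) / N))
      ≤ (N : ℝ) * B := by
    calc ∑ i ∈ Finset.range N, dist (Y ((i : ℝ) / N)) (Y (((i + 1 : ℕ) : ℝ) / N))
        ≤ ∑ _i ∈ Finset.range N, B := by
          refine Finset.sum_le_sum fun i hi => ?_
          have hs := hstep i (Finset.mem_range.1 hi)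
          push_cast
          exact hs
      _ = (N : ℝ) * B := by rw [Finset.sum_const, Finset.card_range, nsmul_eq_mul]
  have hfinal : dist (Y 0) (Y 1) ≤ (N : ℝ) * B := le_trans hmain hsumle
  have hlf : leafRestrict act ι (⇑f) q = Y 0 := by
    apply hminj
    have hmf : mleaf (Xt := Xt) act ι (leafRestrict act ι (⇑f) q) = f (mleaf act ι q) := by
      show mleaf act ι (Function.invFun (mleaf act ι) (f (mleaf act ι q))) = f (mleaf act ι q)
      exact Function.invFun_eq ⟨Y 0, hY0⟩
    rw [hmf, hY0]
  have hlg : leafRestrict act ι (⇑g) q = Y 1 := by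
    apply hminj
    have hmg : mleaf (Xt := Xt) act ι (leafRestrict act ι (⇑g) q) = g (mleaf act ι q) := by
      show mleaf act ι (Function.invFun (mleaf act ι) (g (mleaf act ι q))) = g (mleaf act ι q)
      exact Function.invFun_eq ⟨Y 1, hY1⟩
    rw [hmg, hY1]
  rw [hlf, hlg]
  exact hfinal
end
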